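/- Let G be a finite simple graph, let X be the set of all shortest paths of G (walks between some pair of vertices whose length equals the graph distance between them), and let A be a nonempty set of vertices of G. For each v ∈ A, define the hypothesis h_v : X → {0,1} by h_v(p) = 1 if and only if v is an interior vertex of p. Let BS(A) = max over shortest paths p ∈ X of the number of vertices of A that are interior vertices of p, and suppose BS(A) ≥ 1. Then every finite set S ⊆ X shattered by the family {h_v : v ∈ A} satisfies |S| ≤ ⌊log₂(BS(A))⌋ + 1; i.e., the VC-dimension of {h_v : v ∈ A} is at most ⌊log₂(BS(A))⌋ + 1. -/

import Mathlib

/-! Fix a path `q₀ ∈ S`. Each of the `2 ^ (|S| - 1)` subsets `T` of `S \ {q₀}` is cut out,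
together with `q₀`, by some vertex `v ∈ A`; then `v` is interior to `q₀`, and `T` is recovered
from `v`. So at least `2 ^ (|S| - 1)` vertices of `A` lie inside the single shortest path `q₀`,
whence `2 ^ (|S| - 1) ≤ BS(A)`. -/

open Finset

section Shattering

variable {X α : Type*} [DecidableEq α] {A : Finset α} {I : X → Finset α} {S : Finset X}

theorem two_pow_card_sub_one_le_card_inter
    (hS : ∀ T ⊆ S, ∃ v ∈ A, ∀ q ∈ S, v ∈ I q ↔ q ∈ T) {q₀ : X} (hq₀ : q₀ ∈ S) :
    2 ^ (#S - 1) ≤ #(A ∩ I q₀) := by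
  classical
  obtain ⟨v₀, -⟩ := hS ∅ (empty_subset _)
  have : Nonempty α := ⟨v₀⟩
  have hlabel : ∀ T ∈ (S.erase q₀).powerset, ∃ v ∈ A, ∀ q ∈ S, v ∈ I q ↔ q ∈ insert q₀ T :=
    fun T hT => hS _ (insert_subset hq₀ ((mem_powerset.mp hT).trans (erase_subset _ _)))
  choose! g hgA hg using hlabel
  have hrecover : ∀ T ∈ (S.erase q₀).powerset, T = (S.filter (g T ∈ I ·)).erase q₀ := by
    intro T hT
    have hTS := mem_powerset.mp hT
    ext q
    simp only [mem_erase, mem_filter]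
    constructor
    · intro hq
      obtain ⟨hq₀q, hqS⟩ := mem_erase.mp (hTS hq)
      exact ⟨hq₀q, hqS, (hg T hT q hqS).mpr (mem_insert_of_mem hq)⟩
    · rintro ⟨hq₀q, hqS, hv⟩
      exact (mem_insert.mp ((hg T hT q hqS).mp hv)).resolve_left hq₀q
  calc 2 ^ (#S - 1) = #(S.erase q₀).powerset := by rw [card_powerset, card_erase_of_mem hq₀]
    _ ≤ #(A ∩ I q₀) := by
      refine card_le_card_of_injOn g (fun T hT => ?_) (fun T hT T' hT' hTT' => ?_)
      · exact mem_inter.mpr ⟨hgA T hT, (hg T hT q₀ hq₀).mpr (mem_insert_self _ _)⟩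
      · rw [hrecover T hT, hrecover T' hT', hTT']

theorem card_le_log_two_add_one_of_shatters
    (hS : ∀ T ⊆ S, ∃ v ∈ A, ∀ q ∈ S, v ∈ I q ↔ q ∈ T) {B : ℕ} (hB : ∀ q ∈ S, #(A ∩ I q) ≤ B) :
    #S ≤ Nat.log 2 B + 1 := by
  obtain rfl | ⟨q₀, hq₀⟩ := S.eq_empty_or_nonempty
  · simp
  have := Nat.le_log_of_pow_le one_lt_two
    ((two_pow_card_sub_one_le_card_inter hS hq₀).trans (hB q₀ hq₀))
  omega

end Shattering

theorem stmt10_general {V : Type*} [DecidableEq V] (G : SimpleGraph V)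
    (A : Finset V)
    (BS : ℕ)
    (hub : ∀ (s t : V) (p : G.Walk s t), p.length = G.dist s t →
      (A ∩ (Finset.Ioo 0 p.length).image p.getVert).card ≤ BS)
    (S : Finset {q : Σ s t : V, G.Walk s t // q.2.2.length = G.dist q.1 q.2.1})
    (hshatter : ∀ f : {q : Σ s t : V, G.Walk s t // q.2.2.length = G.dist q.1 q.2.1} → Bool,
      ∃ v ∈ A, ∀ q ∈ S,
        decide (v ∈ (Finset.Ioo 0 q.1.2.2.length).image q.1.2.2.getVert) = f q) :
    S.card ≤ Nat.log 2 BS + 1 := by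
  classical
  refine card_le_log_two_add_one_of_shatters (fun T _ => ?_) fun q _ => hub _ _ q.1.2.2 q.2
  obtain ⟨v, hvA, hv⟩ := hshatter fun q => decide (q ∈ T)
  exact ⟨v, hvA, fun q hq => decide_eq_decide.mp (hv q hq)⟩

/-- VC-dimension bound for betweenness hypotheses: let `X` be the set of shortest paths
of a finite graph `G` and, for each `v` in a nonempty vertex subset `A`, let the
hypothesis `h_v` map a shortest path to `1` iff `v` is one of its interior vertices
(i.e. `v` is visited at some position `i` with `0 < i < length`, equivalently `v` lies in
the image of `Finset.Ioo 0 length` under `getVert`). If `BS(A)` (with `BS(A) ≥ 1`) is the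
maximum, over shortest paths `p`, of the number of vertices of `A` interior to `p`, then
every finite set `S` of shortest paths shattered by `{h_v : v ∈ A}` satisfies
`|S| ≤ ⌊log₂ BS(A)⌋ + 1`. -/
theorem stmt10 {V : Type*} [Fintype V] [DecidableEq V] (G : SimpleGraph V)
    (A : Finset V) (hA : A.Nonempty)
    (BS : ℕ) (hBS1 : 1 ≤ BS)
    (hub : ∀ (s t : V) (p : G.Walk s t), p.length = G.dist s t →
      (A ∩ (Finset.Ioo 0 p.length).image p.getVert).card ≤ BS)
    (hmax : ∃ (s t : V) (p : G.Walk s t), p.length = G.dist s t ∧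
      (A ∩ (Finset.Ioo 0 p.length).image p.getVert).card = BS)
    (S : Finset {q : Σ s t : V, G.Walk s t // q.2.2.length = G.dist q.1 q.2.1})
    (hshatter : ∀ f : {q : Σ s t : V, G.Walk s t // q.2.2.length = G.dist q.1 q.2.1} → Bool,
      ∃ v ∈ A, ∀ q ∈ S,
        decide (v ∈ (Finset.Ioo 0 q.1.2.2.length).image q.1.2.2.getVert) = f q) :
    S.card ≤ Nat.log 2 BS + 1 :=
  stmt10_general G A BS hub S hshatter
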